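/- arXiv:2206.04738 — 2 statements merged into one kernel-verified Lean document; each statement's English description precedes it below -/
import Mathlib

section
/- Let a = (a_1, ..., a_n) be an n-tuple of positive real numbers and let ε > 0. Then there exist positive rational-dependent numbers r_1, ..., r_n (i.e., r_i = T/q_i for a positive real T and positive integers q_1, ..., q_n) such that r_i ≤ a_i ≤ (1 + ε/T) · r_i for all i. -/
/-- Simultaneous approximation: for any reals `x i` and `δ > 0` there is a positive
integer `q` and integers `P i` with `|q * x i - P i| < δ`. -/
lemma near_int_step (n : ℕ) (x : Fin n → ℝ) (δ : ℝ) (hδ : 0 < δ) :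
    ∃ (q : ℕ) (P : Fin n → ℤ), 0 < q ∧ ∀ i, |(q : ℝ) * x i - (P i : ℝ)| < δ := by
  set m : ℕ := ⌈1/δ⌉₊ + 1 with hm
  have hm0 : (0:ℝ) < m := by positivity
  have hminv : 1 / (m:ℝ) < δ := by
    rw [div_lt_iff₀ hm0]
    have h1 : 1/δ < (m:ℝ) := by
      calc 1/δ ≤ (⌈1/δ⌉₊ : ℝ) := Nat.le_ceil _
        _ < m := by exact_mod_cast Nat.lt_succ_self _
    calc (1:ℝ) = δ * (1/δ) := by field_simp
      _ < δ * m := mul_lt_mul_of_pos_left h1 hδ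
  have hbox : ∀ (k : ℕ) (i : Fin n), ⌊Int.fract ((k:ℝ) * x i) * m⌋₊ < m := by
    intro k i
    rw [Nat.floor_lt (mul_nonneg (Int.fract_nonneg _) hm0.le)]
    calc Int.fract ((k:ℝ) * x i) * m < 1 * m :=
          mul_lt_mul_of_pos_right (Int.fract_lt_one _) hm0
      _ = m := one_mul _
  have key : ∀ k1 k2 : ℕ, k1 < k2 →
      (∀ i, ⌊Int.fract ((k1:ℝ) * x i) * m⌋₊ = ⌊Int.fract ((k2:ℝ) * x i) * m⌋₊) →
      ∃ (q : ℕ) (P : Fin n → ℤ), 0 < q ∧ ∀ i, |(q : ℝ) * x i - (P i : ℝ)| < δ := by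
    intro k1 k2 hlt hfeq
    refine ⟨k2 - k1, fun i => ⌊(k2:ℝ) * x i⌋ - ⌊(k1:ℝ) * x i⌋, by omega, ?_⟩
    intro i
    have hu0 : (0:ℝ) ≤ Int.fract ((k1:ℝ) * x i) := Int.fract_nonneg _
    have hv0 : (0:ℝ) ≤ Int.fract ((k2:ℝ) * x i) := Int.fract_nonneg _
    set u := Int.fract ((k1:ℝ) * x i) with hu
    set v := Int.fract ((k2:ℝ) * x i) with hv
    have hfl : ⌊u * m⌋₊ = ⌊v * m⌋₊ := hfeq i
    have hu1 : (⌊u * m⌋₊ : ℝ) ≤ u * m := Nat.floor_le (by positivity)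
    have hu2 : u * m < ⌊u * m⌋₊ + 1 := Nat.lt_floor_add_one _
    have hv1 : (⌊u * m⌋₊ : ℝ) ≤ v * m := by rw [hfl]; exact Nat.floor_le (by positivity)
    have hv2 : v * m < ⌊u * m⌋₊ + 1 := by rw [hfl]; exact Nat.lt_floor_add_one _
    have habs : |v - u| < 1 / m := by
      rw [abs_sub_lt_iff]
      constructor
      · rw [lt_div_iff₀ hm0, sub_mul]; linarith
      · rw [lt_div_iff₀ hm0, sub_mul]; linarith
    have hrw : ((k2 - k1 : ℕ) : ℝ) * x i -
        ((⌊(k2:ℝ) * x i⌋ - ⌊(k1:ℝ) * x i⌋ : ℤ) : ℝ) = v - u := by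
      rw [hv, hu, Int.fract, Int.fract, Nat.cast_sub hlt.le]
      push_cast
      ring
    rw [hrw]
    exact habs.trans hminv
  obtain ⟨k1, k2, hne, heq⟩ :=
    Finite.exists_ne_map_eq_of_infinite
      (fun k : ℕ => fun i : Fin n => (⟨⌊Int.fract ((k:ℝ) * x i) * m⌋₊, hbox k i⟩ : Fin m))
  have heq' : ∀ i, ⌊Int.fract ((k1:ℝ) * x i) * m⌋₊ = ⌊Int.fract ((k2:ℝ) * x i) * m⌋₊ := by
    intro i
    have := congrFun heq i
    simpa [Fin.ext_iff] using this
  rcases hne.lt_or_gt with h | h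
  · exact key k1 k2 h heq'
  · exact key k2 k1 h (fun i => (heq' i).symm)

/-- Approximation of a tuple of positive reals by rationally dependent numbers
`r i = T / q i` with `r i ≤ a i ≤ (1 + ε/T) * r i`. -/
theorem ellipsoid_rational_approx (n : ℕ) (a : Fin n → ℝ) (ha : ∀ i, 0 < a i)
    (ε : ℝ) (hε : 0 < ε) :
    ∃ (T : ℝ) (q : Fin n → ℕ), 0 < T ∧ (∀ i, 0 < q i) ∧
      (∀ i, T / (q i : ℝ) ≤ a i ∧ a i ≤ (1 + ε / T) * (T / (q i : ℝ))) := by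
  obtain ⟨A, hA1, haA⟩ : ∃ A : ℝ, 1 ≤ A ∧ ∀ i, a i ≤ A := by
    refine ⟨1 + ∑ i, a i, by
      have := Finset.sum_nonneg (fun j (_ : j ∈ Finset.univ) => (ha j).le); linarith,
      fun i => ?_⟩
    have h1 : a i ≤ ∑ j, a j :=
      Finset.single_le_sum (fun j _ => (ha j).le) (Finset.mem_univ i)
    have h2 : (0:ℝ) ≤ 1 := zero_le_one
    linarith
  have hA0 : (0:ℝ) < A := lt_of_lt_of_le one_pos hA1
  obtain ⟨δ, hδ0, hδε, hδ1⟩ : ∃ δ : ℝ, 0 < δ ∧ A * δ ≤ ε / 2 ∧ A * δ ≤ 1 / 2 := by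
    refine ⟨min (ε / (2 * A)) (1 / (2 * A)), lt_min (by positivity) (by positivity), ?_, ?_⟩
    · have h := min_le_left (ε / (2 * A)) (1 / (2 * A))
      calc A * min (ε / (2 * A)) (1 / (2 * A)) ≤ A * (ε / (2 * A)) := by nlinarith
        _ = ε / 2 := by field_simp
    · have h := min_le_right (ε / (2 * A)) (1 / (2 * A))
      calc A * min (ε / (2 * A)) (1 / (2 * A)) ≤ A * (1 / (2 * A)) := by nlinarith
        _ = 1 / 2 := by field_simp
  obtain ⟨Q, P, hQ0, hP⟩ := near_int_step n (fun i => 1 / a i) δ hδ0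
  have hQ1 : (1:ℝ) ≤ Q := by exact_mod_cast hQ0
  have hδA : δ < 1 / A := by
    have h2A : 1 / (2 * A) < 1 / A := by
      rw [div_lt_div_iff₀ (by positivity) hA0]; nlinarith
    have : δ ≤ 1 / (2 * A) := by
      rw [le_div_iff₀ (by positivity)]; nlinarith
    linarith
  have hPpos : ∀ i, 0 < P i := by
    intro i
    have h := hP i
    rw [abs_sub_lt_iff] at h
    have h2 : (Q:ℝ) * (1 / a i) - δ < P i := by linarith [h.1]
    have hAi : 1 / A ≤ 1 / a i := one_div_le_one_div_of_le (ha i) (haA i)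
    have hQa : 1 / A ≤ (Q:ℝ) * (1 / a i) := by nlinarith [one_div_pos.mpr hA0]
    have : (0:ℝ) < P i := by linarith
    exact_mod_cast this
  have hkey : ∀ i, |(Q:ℝ) - a i * P i| < A * δ := by
    intro i
    have h := hP i
    have hai := ha i
    have heq : (Q:ℝ) - a i * P i = a i * ((Q:ℝ) * (1 / a i) - P i) := by
      field_simp
    rw [heq, abs_mul, abs_of_pos hai]
    calc a i * |(Q:ℝ) * (1 / a i) - (P i : ℝ)| < a i * δ := (mul_lt_mul_iff_right₀ hai).mpr h
      _ ≤ A * δ := by nlinarith [haA i]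
  have hT0 : (0:ℝ) < (Q:ℝ) - A * δ := by linarith
  refine ⟨(Q:ℝ) - A * δ, fun i => (P i).toNat, hT0, fun i => ?_, fun i => ?_⟩
  · have := hPpos i
    simp only []
    omega
  · have hPi : (((P i).toNat : ℕ) : ℝ) = (P i : ℝ) := by
      exact_mod_cast Int.toNat_of_nonneg (hPpos i).le
    have hPiR : (0:ℝ) < (P i : ℝ) := by exact_mod_cast hPpos i
    have h := hkey i
    rw [abs_sub_lt_iff] at h
    constructor
    · simp only []
      rw [hPi, div_le_iff₀ hPiR]
      nlinarith [h.2]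
    · have hexp : (1 + ε / ((Q:ℝ) - A * δ)) * (((Q:ℝ) - A * δ) / (P i : ℝ))
          = ((Q:ℝ) - A * δ + ε) / (P i : ℝ) := by
        field_simp
      simp only []
      rw [hPi, hexp, le_div_iff₀ hPiR]
      nlinarith [h.1]
end

section
/- Let a_1, a_2 > 0 be real numbers and δ > 0. Then there exist r_1, r_2 > 0 with T := lcm(r_1^{-1}, r_2^{-1}) < ∞ (generalized lcm) such that r_i/(1 + δ/T) ≤ a_i ≤ r_i for i = 1, 2. -/
/-- The set of values `c * q₁ * q₂` over all factorizations `s₁ = c * q₁`,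
`s₂ = c * q₂` with `c` real and `q₁, q₂` positive integers. -/
def glcmSet (s₁ s₂ : ℝ) : Set ℝ :=
  {x | ∃ (c : ℝ) (q₁ q₂ : ℕ), 0 < q₁ ∧ 0 < q₂ ∧ s₁ = c * (q₁ : ℝ) ∧
    s₂ = c * (q₂ : ℝ) ∧ x = c * (q₁ : ℝ) * (q₂ : ℝ)}

/-- One-sided simultaneous approximation: for `β > 0` and `ε > 0` there are
positive naturals `n, m` with `n * β ≤ m ≤ n * β + ε`. -/
lemma exists_nat_mul_le_add (β ε : ℝ) (hβ : 0 < β) (hε : 0 < ε) :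
    ∃ n m : ℕ, 0 < n ∧ 0 < m ∧ (n : ℝ) * β ≤ m ∧ (m : ℝ) ≤ n * β + ε := by
  obtain ⟨N, hN⟩ := exists_nat_one_div_lt (lt_min_iff.mpr ⟨hε, one_pos⟩ : (0:ℝ) < min ε 1)
  obtain ⟨j, k, hk0, hkN, habs⟩ := Real.exists_int_int_abs_mul_sub_le β (Nat.succ_pos N)
  have hkβ : (0 : ℝ) < (k : ℝ) * β := by positivity
  have hsmall : |(k : ℝ) * β - j| < min ε 1 := by
    refine lt_of_le_of_lt habs ?_
    calc (1 : ℝ) / ((N : ℕ).succ + 1) ≤ 1 / ((N : ℝ) + 1) := by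
          apply div_le_div_of_nonneg_left one_pos.le (by positivity)
          push_cast; linarith
      _ < min ε 1 := hN
  rcases le_or_gt ((k : ℝ) * β) j with hle | hlt
  · -- k*β ≤ j
    have hj0 : (0 : ℝ) < j := lt_of_lt_of_le hkβ hle
    have hj0' : 0 < j := by exact_mod_cast hj0
    have hck : ((k.toNat : ℕ) : ℝ) = (k : ℝ) := by exact_mod_cast Int.toNat_of_nonneg hk0.le
    have hcj : ((j.toNat : ℕ) : ℝ) = (j : ℝ) := by exact_mod_cast Int.toNat_of_nonneg hj0'.le
    refine ⟨k.toNat, j.toNat, by omega, by omega, ?_, ?_⟩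
    · rw [hck, hcj]; exact hle
    · rw [hck, hcj]
      have h' : (j : ℝ) - k * β ≤ |(k : ℝ) * β - j| := by
        rw [abs_sub_comm]; exact le_abs_self _
      have := lt_of_le_of_lt h' hsmall
      have := lt_min_iff.mp this
      linarith [this.1]
  · -- j < k*β : use multiples
    set θ : ℝ := (k : ℝ) * β - j with hθdef
    have hθ0 : 0 < θ := by simp only [hθdef]; linarith
    have hθε : θ < min ε 1 := lt_of_le_of_lt (le_abs_self _) hsmall
    have hθ1 : θ < 1 := lt_of_lt_of_le hθε (min_le_right _ _)
    have hθε' : θ < ε := lt_of_lt_of_le hθε (min_le_left _ _)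
    set K : ℤ := ⌊1 / θ⌋ with hKdef
    have hK1 : 1 ≤ K := by
      rw [hKdef]
      exact Int.le_floor.mpr (by rw [Int.cast_one, le_div_iff₀ hθ0]; linarith)
    have hKθle : (K : ℝ) * θ ≤ 1 := by
      have h := Int.floor_le (1 / θ)
      calc (K : ℝ) * θ ≤ (1 / θ) * θ := by
            apply mul_le_mul_of_nonneg_right _ hθ0.le; rw [hKdef]; exact h
        _ = 1 := by field_simp
    have hKθge : 1 - θ < (K : ℝ) * θ := by
      have h := Int.lt_floor_add_one (1 / θ)
      have h2 : 1 / θ - 1 < (K : ℝ) := by rw [hKdef]; linarith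
      have h3 := mul_lt_mul_of_pos_right h2 hθ0
      calc 1 - θ = (1 / θ - 1) * θ := by field_simp
        _ < (K : ℝ) * θ := h3
    have hj0 : 0 ≤ j := by
      by_contra h
      push_neg at h
      have h' : (j : ℝ) ≤ -1 := by exact_mod_cast Int.le_sub_one_of_lt h
      have : 1 ≤ θ := by rw [hθdef]; linarith
      linarith
    have hn0 : 0 < K * k := mul_pos (by omega) hk0
    have hm0 : 0 < K * j + 1 := by positivity
    have hcn : (((K * k).toNat : ℕ) : ℝ) = (K : ℝ) * k := by
      exact_mod_cast Int.toNat_of_nonneg hn0.le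
    have hcm : (((K * j + 1).toNat : ℕ) : ℝ) = (K : ℝ) * j + 1 := by
      exact_mod_cast Int.toNat_of_nonneg hm0.le
    have hkey : (K : ℝ) * k * β = K * j + K * θ := by rw [hθdef]; ring
    refine ⟨(K * k).toNat, (K * j + 1).toNat, by omega, by omega, ?_, ?_⟩
    · rw [hcn, hcm, hkey]; linarith
    · rw [hcn, hcm, hkey]; linarith

/-- Approximation of two positive reals `a₁, a₂` by `r₁, r₂` whose inverses have
a finite generalized least common multiple `T`, with
`rᵢ / (1 + δ/T) ≤ aᵢ ≤ rᵢ`. -/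
theorem dirichlet_torus_action_forms (a₁ a₂ δ : ℝ)
    (h₁ : 0 < a₁) (h₂ : 0 < a₂) (hδ : 0 < δ) :
    ∃ (r₁ r₂ T : ℝ), 0 < r₁ ∧ 0 < r₂ ∧ 0 < T ∧
      (glcmSet r₁⁻¹ r₂⁻¹).Nonempty ∧ T = sInf (glcmSet r₁⁻¹ r₂⁻¹) ∧
      (r₁ / (1 + δ / T) ≤ a₁ ∧ a₁ ≤ r₁) ∧
      (r₂ / (1 + δ / T) ≤ a₂ ∧ a₂ ≤ r₂) := by
  obtain ⟨n, m, hn, hm, hle, hge⟩ :=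
    exists_nat_mul_le_add (a₂ / a₁) (a₂ * δ) (by positivity) (by positivity)
  have hn0 : (0 : ℝ) < n := by exact_mod_cast hn
  have hm0 : (0 : ℝ) < m := by exact_mod_cast hm
  set r₂ : ℝ := (m : ℝ) * a₁ / n with hr₂def
  have hr₂0 : 0 < r₂ := by positivity
  set S := glcmSet a₁⁻¹ r₂⁻¹ with hSdef
  -- two consequences of the approximation
  have key1 : (m : ℝ) * a₁ ≤ a₂ * n + a₂ * δ * a₁ := by
    have h := mul_le_mul_of_nonneg_right hge h₁.le
    have hs : ((n : ℝ) * (a₂ / a₁) + a₂ * δ) * a₁ = a₂ * n + a₂ * δ * a₁ := by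
      field_simp
    linarith [hs ▸ h]
  have key2 : a₂ * n ≤ (m : ℝ) * a₁ := by
    have h := mul_le_mul_of_nonneg_right hle h₁.le
    have hs : ((n : ℝ) * (a₂ / a₁)) * a₁ = a₂ * n := by field_simp
    linarith [hs ▸ h]
  -- the element n / a₁ belongs to S
  have hmem : (n : ℝ) / a₁ ∈ S := by
    refine ⟨1 / (a₁ * m), m, n, hm, hn, ?_, ?_, ?_⟩
    · field_simp
    · rw [hr₂def]; rw [eq_comm]; field_simp
    · rw [eq_comm]; field_simp
  have hne : S.Nonempty := ⟨_, hmem⟩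
  -- lower bound for S
  have hlb : ∀ x ∈ S, a₁⁻¹ ≤ x := by
    rintro x ⟨c, q₁, q₂, hq₁, hq₂, hc₁, _, hx⟩
    have hq₁0 : (0 : ℝ) < q₁ := by exact_mod_cast hq₁
    have hq₂1 : (1 : ℝ) ≤ q₂ := by exact_mod_cast hq₂
    have hc0 : 0 < c := by
      by_contra h
      push_neg at h
      have : c * q₁ ≤ 0 := mul_nonpos_of_nonpos_of_nonneg h hq₁0.le
      rw [← hc₁] at this
      exact absurd this (not_le.mpr (inv_pos.mpr h₁))
    rw [hx, ← hc₁]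
    nlinarith [inv_pos.mpr h₁]
  have hbdd : BddBelow S := ⟨a₁⁻¹, hlb⟩
  set T := sInf S with hTdef
  have hT_le : T ≤ (n : ℝ) / a₁ := csInf_le hbdd hmem
  have hT_ge : a₁⁻¹ ≤ T := le_csInf hne hlb
  have hT0 : 0 < T := lt_of_lt_of_le (inv_pos.mpr h₁) hT_ge
  have hratio : δ * a₁ / n ≤ δ / T := by
    rw [div_le_div_iff₀ (by positivity) hT0]
    have h := mul_le_mul_of_nonneg_left hT_le hδ.le
    have hs : δ * ((n : ℝ) / a₁) * a₁ = δ * n := by field_simp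
    nlinarith
  have hden : (0 : ℝ) < 1 + δ / T := by positivity
  refine ⟨a₁, r₂, T, h₁, hr₂0, hT0, hne, rfl, ⟨?_, le_refl _⟩, ?_, ?_⟩
  · rw [div_le_iff₀ hden]; nlinarith [div_pos hδ hT0]
  · rw [div_le_iff₀ hden]
    have h1 : r₂ ≤ a₂ + a₂ * (δ * a₁ / n) := by
      rw [hr₂def, div_le_iff₀ hn0]
      have hs : (a₂ + a₂ * (δ * a₁ / (n : ℝ))) * n = a₂ * n + a₂ * δ * a₁ := by
        field_simp
      rw [hs]; exact key1
    nlinarith [mul_le_mul_of_nonneg_left hratio h₂.le]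
  · rw [hr₂def, le_div_iff₀ hn0]
    linarith
end
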